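/- arXiv:1105.5075 — 2 statements merged into one kernel-verified Lean document; each statement's English description precedes it below -/
import Mathlib

section
/- Let N ≥ 1, p ∈ (1, ∞), ε > 0, a, b ∈ ℝ^N, and define h(t) := t a + (1-t) b for t ∈ [0,1]. Then there exists C > 1, depending only on N and p, such that for all t ∈ [0,1], the derivative in t of the function t ↦ (ε + |h(t)|²)^{(p/2)-1} h(t) · (a - b) is at least (1/C) (ε + |t a + (1-t) b|²)^{(p/2)-1} |a - b|². -/
/-! With `A = ε + |h|²` the derivative is `A^(p/2-2) ((p-2) (h·(a-b))² + A |a-b|²)`.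
Cauchy–Schwarz gives `(h·(a-b))² ≤ A |a-b|²`, so the bracket is at least `min(1, p-1) A |a-b|²`,
and `C = p/(p-1)` works. -/

open RealInnerProductSpace

theorem HasDerivAt.rpow_const_add_norm_sq_mul_inner {E : Type*} [NormedAddCommGroup E]
    [InnerProductSpace ℝ E] {h : ℝ → E} {v : E} {t ε r : ℝ} (hh : HasDerivAt h v t)
    (hε : 0 < ε) :
    HasDerivAt (fun s => (ε + ‖h s‖ ^ 2) ^ r * ⟪h s, v⟫)
      ((ε + ‖h t‖ ^ 2) ^ (r - 1) * (2 * r * ⟪h t, v⟫ ^ 2 + (ε + ‖h t‖ ^ 2) * ‖v‖ ^ 2)) t := by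
  have hA : 0 < ε + ‖h t‖ ^ 2 := by positivity
  have hnorm : HasDerivAt (fun s => ε + ‖h s‖ ^ 2) (2 * ⟪h t, v⟫) t := by
    simp only [← real_inner_self_eq_norm_sq]
    exact ((hh.inner ℝ hh).const_add ε).congr_deriv (by rw [real_inner_comm v]; ring)
  have hinner : HasDerivAt (fun s => ⟪h s, v⟫) (‖v‖ ^ 2) t := by
    simpa [real_inner_self_eq_norm_sq] using hh.inner ℝ (hasDerivAt_const t v)
  refine ((hnorm.rpow_const (p := r) (Or.inl hA.ne')).mul hinner).congr_deriv ?_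
  rw [Real.rpow_sub_one hA.ne']
  field_simp

theorem sub_one_div_mul_le_sub_two_mul_sq_add {p x M : ℝ} (hp : 1 < p) (hx : x ^ 2 ≤ M) :
    (p - 1) / p * M ≤ (p - 2) * x ^ 2 + M := by
  have hM : 0 ≤ M := (sq_nonneg x).trans hx
  have hp0 : 0 < p := by linarith
  have hle_one : (p - 1) / p ≤ 1 := by rw [div_le_one hp0]; linarith
  have hle_sub : (p - 1) / p ≤ p - 1 := by rw [div_le_iff₀ hp0]; nlinarith
  rcases le_total 2 p with hp2 | hp2
  · nlinarith [sq_nonneg x]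
  · nlinarith

theorem inner_sq_le_add_norm_sq_mul {E : Type*} [NormedAddCommGroup E] [InnerProductSpace ℝ E]
    {ε : ℝ} (hε : 0 ≤ ε) (x v : E) : ⟪x, v⟫ ^ 2 ≤ (ε + ‖x‖ ^ 2) * ‖v‖ ^ 2 :=
  calc ⟪x, v⟫ ^ 2 ≤ (‖x‖ * ‖v‖) ^ 2 := sq_le_sq' (abs_le.mp (abs_real_inner_le_norm x v)).1
        (real_inner_le_norm x v)
    _ ≤ (ε + ‖x‖ ^ 2) * ‖v‖ ^ 2 := by rw [mul_pow]; gcongr; linarith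

theorem stmt_3_general (N : ℕ) (p : ℝ) (hp1 : 1 < p) (ε : ℝ) (hε : 0 < ε)
    (a b : EuclideanSpace ℝ (Fin N)) (h : ℝ → EuclideanSpace ℝ (Fin N))
    (hh : ∀ t : ℝ, h t = t • a + (1 - t) • b) :
    ∃ C : ℝ, 1 < C ∧ ∀ t ∈ Set.Icc (0 : ℝ) 1,
      deriv (fun s : ℝ => (ε + ‖h s‖ ^ 2) ^ (p / 2 - 1) * (inner ℝ (h s) (a - b) : ℝ)) t ≥
        (1 / C) * (ε + ‖t • a + (1 - t) • b‖ ^ 2) ^ (p / 2 - 1) * ‖a - b‖ ^ 2 := by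
  have hp0 : 0 < p - 1 := by linarith
  refine ⟨p / (p - 1), by rw [one_lt_div hp0]; linarith, fun t _ => ?_⟩
  have hline : h = AffineMap.lineMap b a := by
    funext s; rw [hh, AffineMap.lineMap_apply_module, add_comm]
  have hh_deriv : HasDerivAt h (a - b) t := hline ▸ AffineMap.hasDerivAt_lineMap
  have hderiv := hh_deriv.rpow_const_add_norm_sq_mul_inner (r := p / 2 - 1) hε
  rw [hderiv.deriv, ← hh, one_div_div, ge_iff_le]
  have hbracket := sub_one_div_mul_le_sub_two_mul_sq_add hp1
    (inner_sq_le_add_norm_sq_mul hε.le (h t) (a - b))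
  set A := ε + ‖h t‖ ^ 2
  have hpow : A ^ (p / 2 - 1) = A ^ (p / 2 - 1 - 1) * A := by
    rw [← Real.rpow_add_one (by positivity), sub_add_cancel]
  calc (p - 1) / p * A ^ (p / 2 - 1) * ‖a - b‖ ^ 2
      = A ^ (p / 2 - 1 - 1) * ((p - 1) / p * (A * ‖a - b‖ ^ 2)) := by
        rw [hpow]; ring
    _ ≤ A ^ (p / 2 - 1 - 1) * ((p - 2) * ⟪h t, a - b⟫ ^ 2 + A * ‖a - b‖ ^ 2) := by gcongr
    _ = _ := by ring

theorem stmt_3 (N : ℕ) (hN : 1 ≤ N) (p : ℝ) (hp1 : 1 < p) (ε : ℝ) (hε : 0 < ε)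
    (a b : EuclideanSpace ℝ (Fin N)) (h : ℝ → EuclideanSpace ℝ (Fin N))
    (hh : ∀ t : ℝ, h t = t • a + (1 - t) • b) :
    ∃ C : ℝ, 1 < C ∧ ∀ t ∈ Set.Icc (0 : ℝ) 1,
      deriv (fun s : ℝ => (ε + ‖h s‖ ^ 2) ^ (p / 2 - 1) * (inner ℝ (h s) (a - b) : ℝ)) t ≥
        (1 / C) * (ε + ‖t • a + (1 - t) • b‖ ^ 2) ^ (p / 2 - 1) * ‖a - b‖ ^ 2 :=
  stmt_3_general N p hp1 ε hε a b h hh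
end

section
/- Let p ∈ [2, ∞), ε > 0, N ≥ 1 and a, b ∈ ℝ^N. Then ( (ε + |a|²)^{(p/2)-1} − |a|^{p-2} ) a · b ≤ C ε (ε + |a|²)^{(p-2)/2} |b|, where C > 1 depends only on N and p. -/
/-!
Write `q = p/2 - 1 ≥ 0`, `s = |a|` and `A = ε + s²`, so that `|a|^{p-2} = (s²)^q` and the
difference in question is `A^q - (s²)^q ≥ 0`. Applied to `u = s²/A`, the elementary inequality
`1 - u^q ≤ max 1 q * (1 - u)` on `[0, 1]` (concavity of `u ↦ u^q` for `q ≤ 1`, Bernoulli for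
`q ≥ 1`) gives `A^q - (s²)^q ≤ max 1 q * (ε / A) * A^q`, and `2 √ε s ≤ A` (AM-GM) turns the
remaining factor `s / A` into `1 / (2 √ε)`. Cauchy–Schwarz then finishes the proof.
-/

open RealInnerProductSpace

lemma one_sub_rpow_le_max_mul {q u : ℝ} (hq : 0 ≤ q) (hu₀ : 0 ≤ u) (hu₁ : u ≤ 1) :
    1 - u ^ q ≤ max 1 q * (1 - u) := by
  have hu : 0 ≤ 1 - u := sub_nonneg.mpr hu₁
  rcases le_total q 1 with hq₁ | hq₁
  · have hu_le : u ≤ u ^ q := by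
      simpa using Real.rpow_le_rpow_of_exponent_ge' hu₀ hu₁ hq hq₁
    nlinarith [le_max_left 1 q]
  · have bernoulli : 1 + q * (u - 1) ≤ u ^ q := by
      simpa using one_add_mul_self_le_rpow_one_add (by linarith : (-1 : ℝ) ≤ u - 1) hq₁
    nlinarith [mul_le_mul_of_nonneg_right (le_max_right 1 q) hu]

lemma rpow_sub_rpow_le_max_mul {q t A : ℝ} (hq : 0 ≤ q) (ht : 0 ≤ t) (htA : t ≤ A) (hA : 0 < A) :
    A ^ q - t ^ q ≤ max 1 q * ((A - t) / A) * A ^ q := by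
  have hAq : 0 < A ^ q := Real.rpow_pos_of_pos hA q
  have key := one_sub_rpow_le_max_mul hq (div_nonneg ht hA.le) ((div_le_one hA).mpr htA)
  rw [Real.div_rpow ht hA.le, one_sub_div hAq.ne', one_sub_div hA.ne'] at key
  calc A ^ q - t ^ q = (A ^ q - t ^ q) / A ^ q * A ^ q := by field_simp
    _ ≤ max 1 q * ((A - t) / A) * A ^ q := by gcongr

lemma rpow_sub_rpow_mul_le {q ε s : ℝ} (hq : 0 ≤ q) (hε : 0 < ε) (hs : 0 ≤ s) :
    ((ε + s ^ 2) ^ q - (s ^ 2) ^ q) * s ≤ max 1 q / (2 * √ε) * ε * (ε + s ^ 2) ^ q := by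
  set A := ε + s ^ 2
  have hA : 0 < A := by positivity
  have am_gm : 2 * √ε * s ≤ A := by
    simpa [Real.sq_sqrt hε.le] using two_mul_le_add_sq √ε s
  have hdiff := rpow_sub_rpow_le_max_mul hq (sq_nonneg s) (by simp [A, hε.le]) hA
  have hAt : A - s ^ 2 = ε := by simp [A]
  rw [hAt] at hdiff
  calc ((ε + s ^ 2) ^ q - (s ^ 2) ^ q) * s ≤ max 1 q * (ε / A) * A ^ q * s := by gcongr
    _ = max 1 q * ε * A ^ q * (s / A) := by ring
    _ ≤ max 1 q * ε * A ^ q * (1 / (2 * √ε)) := by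
        gcongr max 1 q * ε * A ^ q * ?_
        rw [div_le_div_iff₀ hA (by positivity)]
        linarith
    _ = max 1 q / (2 * √ε) * ε * A ^ q := by ring

theorem stmt_19_general (p : ℝ) (hp : 2 ≤ p) (ε : ℝ) (hε : 0 < ε) (N : ℕ) :
    ∃ C : ℝ, 1 < C ∧ ∀ a b : EuclideanSpace ℝ (Fin N),
      ((ε + ‖a‖ ^ 2) ^ (p / 2 - 1) - ‖a‖ ^ (p - 2)) * (inner ℝ (a) (b) : ℝ) ≤
        C * ε * (ε + ‖a‖ ^ 2) ^ ((p - 2) / 2) * ‖b‖ := by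
  have hq : 0 ≤ p / 2 - 1 := by linarith
  set q := p / 2 - 1
  set K := max 1 q / (2 * √ε)
  have hK : 0 < K := by positivity
  refine ⟨1 + K, by linarith, fun a b => ?_⟩
  have hexp : (p - 2) / 2 = q := by ring
  have hnorm : ‖a‖ ^ (p - 2) = (‖a‖ ^ 2) ^ q := by
    rw [← Real.rpow_natCast, ← Real.rpow_mul (norm_nonneg a)]
    congr 1
    push_cast
    ring
  have hdiff : 0 ≤ (ε + ‖a‖ ^ 2) ^ q - (‖a‖ ^ 2) ^ q := by
    have := Real.rpow_le_rpow (sq_nonneg ‖a‖) (le_add_of_nonneg_left hε.le) hq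
    linarith
  rw [hexp, hnorm]
  calc ((ε + ‖a‖ ^ 2) ^ q - (‖a‖ ^ 2) ^ q) * inner ℝ a b
      ≤ ((ε + ‖a‖ ^ 2) ^ q - (‖a‖ ^ 2) ^ q) * ‖a‖ * ‖b‖ := by
        rw [mul_assoc]
        exact mul_le_mul_of_nonneg_left (real_inner_le_norm a b) hdiff
    _ ≤ K * ε * (ε + ‖a‖ ^ 2) ^ q * ‖b‖ :=
        mul_le_mul_of_nonneg_right (rpow_sub_rpow_mul_le hq hε (norm_nonneg a)) (norm_nonneg b)
    _ ≤ (1 + K) * ε * (ε + ‖a‖ ^ 2) ^ q * ‖b‖ := by gcongr; linarith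

theorem stmt_19 (p : ℝ) (hp : 2 ≤ p) (ε : ℝ) (hε : 0 < ε) (N : ℕ) (hN : 1 ≤ N) :
    ∃ C : ℝ, 1 < C ∧ ∀ a b : EuclideanSpace ℝ (Fin N),
      ((ε + ‖a‖ ^ 2) ^ (p / 2 - 1) - ‖a‖ ^ (p - 2)) * (inner ℝ (a) (b) : ℝ) ≤
        C * ε * (ε + ‖a‖ ^ 2) ^ ((p - 2) / 2) * ‖b‖ :=
  stmt_19_general p hp ε hε N
end
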